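/- Along solutions of the complex form of the magnetic system z' = w, w' = −i s K w + μ z (K real diagonal, μ real-valued), the Hermitian-conjugate-antisymmetric momentum map Φ = (1/2)(w z* − z w*) + (i s/4)(K z z* + z z* K) satisfies Φ' = (i s/2)[Φ_0, K], where Φ_0 = (1/2)(w z* − z w*). -/

import Mathlib

/-- The rank-one matrix `z z*` with entries `zᵢ conj(zⱼ)`. -/
noncomputable def zzStar {ℓ : ℕ} (z : Fin ℓ → ℂ) : Matrix (Fin ℓ) (Fin ℓ) ℂ :=
  Matrix.of fun i j => z i * (starRingEnd ℂ) (z j)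

/-- `Φ_0 = (1/2)(w z* − z w*)`. -/
noncomputable def phiZero {ℓ : ℕ} (z w : Fin ℓ → ℂ) : Matrix (Fin ℓ) (Fin ℓ) ℂ :=
  Matrix.of fun i j => (1 / 2 : ℂ) *
    (w i * (starRingEnd ℂ) (z j) - z i * (starRingEnd ℂ) (w j))

/-- The complex magnetic momentum map
`Φ = (1/2)(w z* − z w*) + (i s/4)(K z z* + z z* K)`. -/
noncomputable def phiU {ℓ : ℕ} (s : ℝ) (K : Fin ℓ → ℝ) (z w : Fin ℓ → ℂ) :
    Matrix (Fin ℓ) (Fin ℓ) ℂ :=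
  phiZero z w + (Complex.I * s / 4) •
    (Matrix.diagonal (fun i => (K i : ℂ)) * zzStar z
      + zzStar z * Matrix.diagonal (fun i => (K i : ℂ)))

/-- along solutions of `z' = w`, `w' = −isKw + μz`, the momentum
map `Φ` satisfies `Φ' = (is/2)[Φ_0, K]`. -/
theorem magnetic_momentum_derivative_complex
    (ℓ : ℕ) (z w : ℝ → Fin ℓ → ℂ) (K : Fin ℓ → ℝ) (s : ℝ) (μ : ℝ → ℝ)
    (hz : ∀ i t, HasDerivAt (fun τ => z τ i) (w t i) t)
    (hw : ∀ i t, HasDerivAt (fun τ => w τ i)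
      (-(Complex.I * s * K i * w t i) + μ t * z t i) t) :
    ∀ i j t, HasDerivAt (fun τ => phiU s K (z τ) (w τ) i j)
      (((Complex.I * s / 2) •
        (phiZero (z t) (w t) * Matrix.diagonal (fun i => (K i : ℂ))
          - Matrix.diagonal (fun i => (K i : ℂ)) * phiZero (z t) (w t))) i j) t := by
  intro i j t
  simp only [phiU, phiZero, zzStar, Matrix.add_apply, Matrix.smul_apply, Matrix.sub_apply,
    Matrix.diagonal_mul, Matrix.mul_diagonal, Matrix.of_apply, smul_eq_mul]
  have hzcj : HasDerivAt (fun τ => (starRingEnd ℂ) (z τ j))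
      ((starRingEnd ℂ) (w t j)) t := by
    simp only [starRingEnd_apply]; exact (hz j t).star
  have hwcj : HasDerivAt (fun τ => (starRingEnd ℂ) (w τ j))
      ((starRingEnd ℂ) (-(Complex.I * s * K j * w t j) + μ t * z t j)) t := by
    simp only [starRingEnd_apply]; exact (hw j t).star
  have h1 := (hw i t).mul hzcj
  have h2 := (hz i t).mul hwcj
  have h3 := (hz i t).mul hzcj
  have H := ((h1.sub h2).const_mul ((1:ℂ)/2)).add
    (((h3.const_mul ((K i : ℂ))).add (h3.mul_const ((K j : ℂ)))).const_mul
      (Complex.I * s / 4))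
  convert H using 1
  · rfl
  · rfl
  simp only [map_add, map_mul, map_neg, Complex.conj_I, Complex.conj_ofReal]
  ring
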